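/- Let ℳ = (Δ, (I_k)_{k∈ℕ}) be a temporal interpretation that is stabilized from instant N onward, i.e. A^{I_k} = A^{I_N} for every concept name A and S^{I_k} = S^{I_N} for every role name S, for all k ≥ N. Then for every temporal concept D and every instant i ∈ ℕ, the infinitary temporal semantics reduces to a bounded one: (◇_F D)^{I_i} = ⋃_{i < k ≤ max(i+1,N)} D^{I_k} and (□_F D)^{I_i} = ⋂_{i < k ≤ max(i+1,N)} D^{I_k}. -/

import Mathlib

/-!
By induction on concepts, every extension `D^{I_k}` is constant for `k ≥ N` (for `◇_F` and `□_F`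
because every future instant of a `k ≥ N` already lies in the stable region). Hence an instant
`k > i` beyond `max (i + 1) N` can be replaced by `max (i + 1) N` itself, which lies in the window
`(i, max (i + 1) N]` and sees the same extension.
-/

/-- TDL-Lite roles: a role name `S ∈ N_R` (coded by a natural number) or its inverse `S⁻`. -/
inductive TRole : Type
  | name (S : ℕ)
  | inv  (S : ℕ)
deriving DecidableEq

/-- TDL-Lite temporal concepts: `⊥ | ⊤ | A | ∃R | ¬D | D₁ ⊓ D₂ | ◇_F D | □_F D`. -/
inductive TConcept : Type
  | bot
  | top
  | atom (A : ℕ)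
  | ex (R : TRole)
  | neg (C : TConcept)
  | inter (C D : TConcept)
  | dia (C : TConcept)
  | box (C : TConcept)
deriving DecidableEq

/-- A temporal interpretation: a fixed nonempty domain `Δ` together with, for each
instant `n`, an extension for every concept name and every role name. -/
structure TInterp (Δ : Type) : Type where
  nonempty : Nonempty Δ
  conc : ℕ → ℕ → Set Δ
  role : ℕ → ℕ → Set (Δ × Δ)

variable {Δ : Type}

/-- Semantics of roles at an instant. -/
def TInterp.rsem (M : TInterp Δ) (n : ℕ) : TRole → Set (Δ × Δ)
  | .name S => M.role n S
  | .inv S  => {p | (p.2, p.1) ∈ M.role n S}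

/-- Semantics of temporal concepts at an instant; `◇_F` and `□_F` quantify over the
strict future. -/
def TInterp.csem (M : TInterp Δ) : TConcept → ℕ → Set Δ
  | .bot, _ => ∅
  | .top, _ => Set.univ
  | .atom A, n => M.conc n A
  | .ex R, n => {d | ∃ d', (d, d') ∈ M.rsem n R}
  | .neg C, n => (M.csem C n)ᶜ
  | .inter C D, n => M.csem C n ∩ M.csem D n
  | .dia C, n => {d | ∃ k, n < k ∧ d ∈ M.csem C k}
  | .box C, n => {d | ∀ k, n < k → d ∈ M.csem C k}

/-- `M` is stabilized from instant `N` onward: the extension of every concept name and of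
every role name at any instant `k ≥ N` coincides with its extension at `N`. -/
def Stabilized (M : TInterp Δ) (N : ℕ) : Prop :=
  ∀ k : ℕ, N ≤ k → (∀ A : ℕ, M.conc k A = M.conc N A) ∧ (∀ S : ℕ, M.role k S = M.role N S)

section EventuallyConstant

variable {α : Type*} {f : ℕ → Set α} {N : ℕ}

theorem exists_mem_Ioc_eq_of_lt (hf : ∀ k, N ≤ k → f k = f N) {i k : ℕ} (hik : i < k) :
    ∃ j ∈ Finset.Ioc i (max (i + 1) N), f j = f k := by
  by_cases hk : k ≤ max (i + 1) N
  · exact ⟨k, Finset.mem_Ioc.2 ⟨hik, hk⟩, rfl⟩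
  · refine ⟨max (i + 1) N, Finset.mem_Ioc.2 ⟨by omega, le_rfl⟩, ?_⟩
    rw [hf _ (le_max_right _ _), hf k (by omega)]

theorem setOf_exists_gt_eq_biUnion_Ioc (hf : ∀ k, N ≤ k → f k = f N) (i : ℕ) :
    {a | ∃ k, i < k ∧ a ∈ f k} = ⋃ k ∈ Finset.Ioc i (max (i + 1) N), f k := by
  ext a
  simp only [Set.mem_ofPred_eq, Set.mem_iUnion, Finset.mem_Ioc, exists_prop]
  constructor
  · rintro ⟨k, hik, ha⟩
    obtain ⟨j, hj, hjk⟩ := exists_mem_Ioc_eq_of_lt hf hik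
    exact ⟨j, Finset.mem_Ioc.1 hj, hjk ▸ ha⟩
  · rintro ⟨k, ⟨hik, -⟩, ha⟩
    exact ⟨k, hik, ha⟩

theorem setOf_forall_gt_eq_biInter_Ioc (hf : ∀ k, N ≤ k → f k = f N) (i : ℕ) :
    {a | ∀ k, i < k → a ∈ f k} = ⋂ k ∈ Finset.Ioc i (max (i + 1) N), f k := by
  ext a
  simp only [Set.mem_ofPred_eq, Set.mem_iInter, Finset.mem_Ioc]
  constructor
  · exact fun ha k hk => ha k hk.1
  · intro ha k hik
    obtain ⟨j, hj, hjk⟩ := exists_mem_Ioc_eq_of_lt hf hik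
    exact hjk ▸ ha j (Finset.mem_Ioc.1 hj)

theorem setOf_exists_gt_eq_of_le (hf : ∀ k, N ≤ k → f k = f N) {i : ℕ} (hi : N ≤ i) :
    {a | ∃ k, i < k ∧ a ∈ f k} = f N := by
  rw [setOf_exists_gt_eq_biUnion_Ioc hf, max_eq_left (by omega), Nat.Ioc_succ_singleton]
  simp [hf (i + 1) (by omega)]

theorem setOf_forall_gt_eq_of_le (hf : ∀ k, N ≤ k → f k = f N) {i : ℕ} (hi : N ≤ i) :
    {a | ∀ k, i < k → a ∈ f k} = f N := by
  rw [setOf_forall_gt_eq_biInter_Ioc hf, max_eq_left (by omega), Nat.Ioc_succ_singleton]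
  simp [hf (i + 1) (by omega)]

end EventuallyConstant

namespace Stabilized

variable {M : TInterp Δ} {N : ℕ}

theorem rsem_eq (hstab : Stabilized M N) (R : TRole) {k : ℕ} (hk : N ≤ k) :
    M.rsem k R = M.rsem N R := by
  cases R <;> simp only [TInterp.rsem, (hstab k hk).2]

theorem csem_eq (hstab : Stabilized M N) (D : TConcept) {k : ℕ} (hk : N ≤ k) :
    M.csem D k = M.csem D N := by
  induction D generalizing k with
  | bot | top => rfl
  | atom A => exact (hstab k hk).1 A
  | ex R => simp only [TInterp.csem, hstab.rsem_eq R hk]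
  | neg C ih => simp only [TInterp.csem, ih hk]
  | inter C D ihC ihD => simp only [TInterp.csem, ihC hk, ihD hk]
  | dia C ih =>
    simp only [TInterp.csem]
    rw [setOf_exists_gt_eq_of_le (fun _ => ih) hk, setOf_exists_gt_eq_of_le (fun _ => ih) le_rfl]
  | box C ih =>
    simp only [TInterp.csem]
    rw [setOf_forall_gt_eq_of_le (fun _ => ih) hk, setOf_forall_gt_eq_of_le (fun _ => ih) le_rfl]

end Stabilized

/-- If a temporal interpretation is stabilized from instant `N` onward,
the infinitary semantics of `◇_F` and `□_F` reduces to a bounded one: for every temporal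
concept `D` and instant `i`,
`(◇_F D)^{I_i} = ⋃_{i < k ≤ max (i+1) N} D^{I_k}` and
`(□_F D)^{I_i} = ⋂_{i < k ≤ max (i+1) N} D^{I_k}`. -/
theorem temporal_semantics_bounded (M : TInterp Δ) (N : ℕ) (hstab : Stabilized M N) :
    ∀ (D : TConcept) (i : ℕ),
      (M.csem (TConcept.dia D) i = ⋃ k ∈ Finset.Ioc i (max (i + 1) N), M.csem D k) ∧
      (M.csem (TConcept.box D) i = ⋂ k ∈ Finset.Ioc i (max (i + 1) N), M.csem D k) := by
  intro D i
  have hD : ∀ k, N ≤ k → M.csem D k = M.csem D N := fun _ => hstab.csem_eq D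
  exact ⟨setOf_exists_gt_eq_biUnion_Ioc hD i, setOf_forall_gt_eq_biInter_Ioc hD i⟩
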